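/- Let M ⊆ H be a closed subspace, let ρ ∈ H with ‖ρ‖ ≤ B, let V = ρ + M⊥, and let ρ̃ ∈ V be the element of minimal norm in V. Then for every g ∈ H, |⟨ρ̃, g⟩ − ⟨ρ, g⟩| ≤ ‖ρ − P_M(ρ)‖ · ‖g − P_M(g)‖ ≤ ‖ρ‖ · ‖g − P_M(g)‖ ≤ B · ‖g − P_M(g)‖. -/

import Mathlib

open scoped InnerProductSpace RealInnerProductSpace

/-! The minimal-norm element of `ρ + Mᗮ` is `P_M ρ`: every `x` in the variety has `P_M x = P_M ρ`,
so Pythagoras gives `‖x‖² = ‖P_M ρ‖² + ‖x - P_M x‖²`. Hence `ρ̃ - ρ = -(ρ - P_M ρ)`, and since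
`ρ - P_M ρ ⊥ M`, pairing it with `g` is the same as pairing it with `g - P_M g`; Cauchy–Schwarz
finishes the first bound, and the other two are `‖ρ - P_M ρ‖ ≤ ‖ρ‖ ≤ B`. -/

namespace Submodule

variable {𝕜 E : Type*} [RCLike 𝕜] [NormedAddCommGroup E] [InnerProductSpace 𝕜 E]
  {K : Submodule 𝕜 E} [K.HasOrthogonalProjection]

theorem norm_sub_starProjection_le (v : E) : ‖v - K.starProjection v‖ ≤ ‖v‖ := by
  simpa using Kᗮ.norm_starProjection_apply_le v

theorem inner_sub_starProjection_left_eq (v w : E) :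
    ⟪v - K.starProjection v, w⟫_𝕜 = ⟪v - K.starProjection v, w - K.starProjection w⟫_𝕜 := by
  rw [inner_sub_right, starProjection_inner_eq_zero _ _ (K.starProjection_apply_mem w), sub_zero]

theorem starProjection_eq_of_sub_mem_orthogonal {u v : E} (h : u - v ∈ Kᗮ) :
    K.starProjection u = K.starProjection v := by
  rw [← sub_eq_zero, ← map_sub, starProjection_apply_eq_zero_iff]
  exact h

theorem starProjection_sub_mem_orthogonal (v : E) : K.starProjection v - v ∈ Kᗮ := by
  simpa using Kᗮ.neg_mem (K.sub_starProjection_mem_orthogonal v)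

theorem eq_starProjection_of_sub_mem_orthogonal_of_norm_le {u x : E} (hx : x - u ∈ Kᗮ)
    (hle : ‖x‖ ≤ ‖K.starProjection u‖) : x = K.starProjection u := by
  have hPx : K.starProjection x = K.starProjection u := starProjection_eq_of_sub_mem_orthogonal hx
  have hpyth := K.norm_sq_eq_add_norm_sq_starProjection x
  rw [starProjection_orthogonal_val, hPx] at hpyth
  have hzero : ‖x - K.starProjection u‖ = 0 := by
    nlinarith [norm_nonneg x, norm_nonneg (K.starProjection u), norm_nonneg (x - K.starProjection u)]
  rwa [norm_eq_zero, sub_eq_zero] at hzero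

end Submodule

theorem stmt_9_general
    {H : Type*} [NormedAddCommGroup H] [InnerProductSpace ℝ H]
    (M : Submodule ℝ H) [CompleteSpace M]
    (ρ ρ' : H) (B : ℝ) (hB : ‖ρ‖ ≤ B)
    (V : Set H) (hV : V = {x : H | x - ρ ∈ Mᗮ})
    (hρ'V : ρ' ∈ V) (hmin : ∀ x ∈ V, ‖ρ'‖ ≤ ‖x‖) :
    ∀ g : H,
      |⟪ρ', g⟫ - ⟪ρ, g⟫| ≤
        ‖ρ - (M.orthogonalProjectionOnto ρ : H)‖ * ‖g - (M.orthogonalProjectionOnto g : H)‖ ∧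
      ‖ρ - (M.orthogonalProjectionOnto ρ : H)‖ * ‖g - (M.orthogonalProjectionOnto g : H)‖ ≤
        ‖ρ‖ * ‖g - (M.orthogonalProjectionOnto g : H)‖ ∧
      ‖ρ‖ * ‖g - (M.orthogonalProjectionOnto g : H)‖ ≤
        B * ‖g - (M.orthogonalProjectionOnto g : H)‖ := by
  subst hV
  have hρ' : ρ' = M.starProjection ρ :=
    Submodule.eq_starProjection_of_sub_mem_orthogonal_of_norm_le hρ'V
      (hmin _ (Submodule.starProjection_sub_mem_orthogonal ρ))
  intro g
  simp only [Submodule.coe_orthogonalProjectionOnto_apply]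
  refine ⟨?_, by gcongr; exact Submodule.norm_sub_starProjection_le ρ, by gcongr⟩
  calc |⟪ρ', g⟫ - ⟪ρ, g⟫|
      = |⟪ρ - M.starProjection ρ, g - M.starProjection g⟫| := by
        rw [hρ', abs_sub_comm, ← inner_sub_left, Submodule.inner_sub_starProjection_left_eq]
    _ ≤ _ := abs_real_inner_le_norm _ _

/-- Let `M ⊆ H` be a closed subspace of a real Hilbert space, `ρ ∈ H` with `‖ρ‖ ≤ B`,
`V = ρ + Mᗮ = {x | x - ρ ∈ Mᗮ}`, and let `ρ'` (the estimate ρ̃ = P_V(0)) be the element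
of minimal norm in `V`. Then for every `g ∈ H`,
`|⟪ρ', g⟫ - ⟪ρ, g⟫| ≤ ‖ρ - P_M ρ‖ * ‖g - P_M g‖ ≤ ‖ρ‖ * ‖g - P_M g‖ ≤ B * ‖g - P_M g‖`. -/
theorem stmt_9
    {H : Type*} [NormedAddCommGroup H] [InnerProductSpace ℝ H] [CompleteSpace H]
    (M : Submodule ℝ H) [CompleteSpace M]
    (ρ ρ' : H) (B : ℝ) (hB : ‖ρ‖ ≤ B)
    (V : Set H) (hV : V = {x : H | x - ρ ∈ Mᗮ})
    (hρ'V : ρ' ∈ V) (hmin : ∀ x ∈ V, ‖ρ'‖ ≤ ‖x‖) :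
    ∀ g : H,
      |⟪ρ', g⟫ - ⟪ρ, g⟫| ≤
        ‖ρ - (M.orthogonalProjectionOnto ρ : H)‖ * ‖g - (M.orthogonalProjectionOnto g : H)‖ ∧
      ‖ρ - (M.orthogonalProjectionOnto ρ : H)‖ * ‖g - (M.orthogonalProjectionOnto g : H)‖ ≤
        ‖ρ‖ * ‖g - (M.orthogonalProjectionOnto g : H)‖ ∧
      ‖ρ‖ * ‖g - (M.orthogonalProjectionOnto g : H)‖ ≤
        B * ‖g - (M.orthogonalProjectionOnto g : H)‖ :=
  stmt_9_general M ρ ρ' B hB V hV hρ'V hmin
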